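/- Let (V, s, t, c) be a flow network, let f be a maximum flow, and let D ⊆ V with s, t ∉ D be an out-tree rooted at a vertex v ∈ D: there is a function par : D → V such that for every w ∈ D, c w (par w) > 0 and c w u = 0 for every u ≠ par w (each w ∈ D has a unique outgoing positive-capacity edge, to par w); par w ∈ D for every w ∈ D \ {v}, while par v ∉ D; and for every w ∈ D, iterating par starting from w reaches v after finitely many steps. If v ∈ S_f ∪ U_f, then D ⊆ S_f ∪ U_f; moreover, if additionally par v ∈ T_f, then every maximum flow g in the network satisfies g v (par v) = c v (par v) (the edge from v to par v is saturated by every maximum flow). -/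

import Mathlib

open scoped Classical

/-- A flow network: a finite vertex type with a source `s`, a sink `t` and a
capacity function `c` with no self-loops, no edges into `s` and no edges out of `t`. -/
structure FlowNet (V : Type) [Fintype V] where
  s : V
  t : V
  hst : s ≠ t
  c : V → V → ℕ
  c_self : ∀ v, c v v = 0
  c_to_s : ∀ v, c v s = 0
  c_from_t : ∀ v, c t v = 0

namespace FlowNet

variable {V : Type} [Fintype V]

/-- `f` is a flow: capacity-respecting and conserving flow at all internal vertices. -/
def IsFlow (N : FlowNet V) (f : V → V → ℕ) : Prop :=
  (∀ u v, f u v ≤ N.c u v) ∧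
  ∀ v, v ≠ N.s → v ≠ N.t → (∑ u, f u v) = ∑ u, f v u

/-- The value of a flow: total flow out of the source. -/
def value (N : FlowNet V) (f : V → V → ℕ) : ℕ := ∑ v, f N.s v

/-- `f` is a maximum flow. -/
def IsMaxFlow (N : FlowNet V) (f : V → V → ℕ) : Prop :=
  N.IsFlow f ∧ ∀ f', N.IsFlow f' → N.value f' ≤ N.value f

/-- Edge of the residual graph of `f`. -/
def ResEdge (N : FlowNet V) (f : V → V → ℕ) (u v : V) : Prop :=
  f u v < N.c u v ∨ 0 < f v u

/-- `S_f`: vertices reachable from `s` in the residual graph of `f`. -/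
def Sset (N : FlowNet V) (f : V → V → ℕ) : Set V :=
  {v | Relation.ReflTransGen (N.ResEdge f) N.s v}

/-- `T_f`: vertices from which `t` is reachable in the residual graph of `f`. -/
def Tset (N : FlowNet V) (f : V → V → ℕ) : Set V :=
  {v | Relation.ReflTransGen (N.ResEdge f) v N.t}

/-- `U_f`: all remaining vertices. -/
def Uset (N : FlowNet V) (f : V → V → ℕ) : Set V :=
  (N.Sset f ∪ N.Tset f)ᶜ

/-- An s-t cut: a set of vertices containing `s` but not `t`. -/
def IsCut (N : FlowNet V) (X : Set V) : Prop :=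
  N.s ∈ X ∧ N.t ∉ X

/-- The capacity of a cut. -/
noncomputable def cap (N : FlowNet V) (X : Set V) : ℕ :=
  ∑ u, ∑ v, if u ∈ X ∧ v ∉ X then N.c u v else 0

/-- A minimum s-t cut. -/
def IsMinCut (N : FlowNet V) (X : Set V) : Prop :=
  N.IsCut X ∧ ∀ Y, N.IsCut Y → N.cap X ≤ N.cap Y

end FlowNet

/-!
If `s` reached `t` in the residual graph of `f`, pushing one unit along a residual path that
never revisits a vertex would give a larger flow; so `s ∉ T_f`, and every edge from `T_fᶜ` into
`T_f` is saturated by `f` and carries no flow backwards. Hence the cut `T_fᶜ` has capacity equal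
to the maximum flow value, and every maximum flow saturates all its edges.

Inside the tree `D`, the only positive-capacity edge out of `w` is `w → par w`, so by
conservation any flow entering `w` leaves along it. If a residual path from `w ∈ D` to `t`
leaves `D` forwards, it does so along `v → par v`; if it leaves backwards along an edge carrying
flow into some `a ∈ D`, then all tree edges from `a` up to `v` carry flow, so `v` reaches `a`
backwards. Either way `v ∈ T_f`, which is impossible when `v ∈ S_f ∪ U_f`.
-/

theorem Relation.ReflTransGen.avoid_start {α : Type*} {r : α → α → Prop} {a b : α}
    (h : Relation.ReflTransGen r a b) :
    Relation.ReflTransGen (fun x y => r x y ∧ y ≠ a) a b := by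
  induction h with
  | refl => exact .refl
  | @tail c d _ hcd ih =>
    by_cases hda : d = a
    · exact hda ▸ .refl
    · exact ih.tail ⟨hcd, hda⟩

namespace FlowNet

variable {V : Type} [Fintype V] (N : FlowNet V)

def excess (g : V → V → ℕ) (w : V) : ℤ := ∑ a, (g a w : ℤ) - ∑ a, (g w a : ℤ)

lemma excess_eq_zero {f : V → V → ℕ} (hf : N.IsFlow f) {w : V} (hs : w ≠ N.s)
    (ht : w ≠ N.t) : excess f w = 0 := by
  rw [excess, sub_eq_zero]
  exact_mod_cast hf.2 w hs ht

lemma excess_source {g : V → V → ℕ} (hg : ∀ a b, g a b ≤ N.c a b) :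
    excess g N.s = -N.value g := by
  have hin : ∀ a, g a N.s = 0 := fun a => Nat.le_zero.1 ((hg a N.s).trans_eq (N.c_to_s a))
  simp [excess, value, hin]

lemma excess_of_add_single {g g' : V → V → ℕ} {x y : V} {z : ℤ}
    (h : ∀ a b, (g' a b : ℤ) = g a b + if a = x ∧ b = y then z else 0) (w : V) :
    excess g' w = excess g w + (if w = y then z else 0) - (if w = x then z else 0) := by
  simp only [excess, h, Finset.sum_add_distrib, ite_and, Finset.sum_ite_eq', Finset.mem_univ,
    if_true, Finset.sum_ite_irrel, Finset.sum_const_zero]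
  ring

lemma exists_push {g : V → V → ℕ} (hg : ∀ a b, g a b ≤ N.c a b) {u u' : V}
    (he : N.ResEdge g u u') :
    ∃ g' : V → V → ℕ, (∀ a b, g' a b ≤ N.c a b) ∧
      (∀ w, excess g' w = excess g w + (if w = u' then 1 else 0) - (if w = u then 1 else 0)) ∧
      ∀ a b, b ≠ u → b ≠ u' → (N.ResEdge g' a b ↔ N.ResEdge g a b) := by
  rcases he with hlt | hpos
  · refine ⟨fun a b => g a b + if a = u ∧ b = u' then 1 else 0, fun a b => ?_,
      excess_of_add_single fun a b => by push_cast; rfl, fun a b hbu hbu' => ?_⟩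
    · by_cases h : a = u ∧ b = u'
      · obtain ⟨rfl, rfl⟩ := h
        simpa using hlt
      · simpa [h] using hg a b
    · simp [ResEdge, hbu, hbu']
  · refine ⟨fun a b => g a b - if a = u' ∧ b = u then 1 else 0,
      fun a b => (Nat.sub_le _ _).trans (hg a b), fun w => ?_, fun a b hbu hbu' => ?_⟩
    · have hcast : ∀ a b, ((g a b - if a = u' ∧ b = u then 1 else 0 : ℕ) : ℤ)
          = g a b + if a = u' ∧ b = u then -1 else 0 := by
        intro a b
        by_cases h : a = u' ∧ b = u
        · obtain ⟨rfl, rfl⟩ := h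
          simp [Nat.cast_sub hpos]
          ring
        · simp [h]
      rw [excess_of_add_single hcast]
      split_ifs <;> ring
    · simp [ResEdge, hbu, hbu']

/-- `g` is `f` with one unit pushed from `s` to `u`. The remaining path enters only the unvisited
vertices `W`, so later pushes cannot destroy its residual edges. -/
lemma exists_flow_value_succ_of_reach {f : V → V → ℕ} (hf : N.IsFlow f) (W : Finset V) :
    ∀ (g : V → V → ℕ) (u : V), u ∉ W → (∀ a b, g a b ≤ N.c a b) →
      (∀ w, w ≠ N.t →
        excess g w + (if w = N.s then 1 else 0) = excess f w + (if w = u then 1 else 0)) →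
      Relation.ReflTransGen (fun a b => N.ResEdge g a b ∧ b ∈ W) u N.t →
      ∃ g', N.IsFlow g' ∧ N.value g' = N.value f + 1 := by
  induction W using Finset.strongInduction with
  | H W ih =>
  intro g u huW hg hexcess hpath
  rcases hpath.cases_head with rfl | ⟨u', ⟨he, hu'W⟩, hrest⟩
  · refine ⟨g, ⟨hg, fun w hs ht => ?_⟩, ?_⟩
    · have h := hexcess w ht
      rw [if_neg hs, if_neg ht, N.excess_eq_zero hf hs ht, add_zero, add_zero, excess,
        sub_eq_zero] at h
      exact_mod_cast h
    · have h := hexcess N.s N.hst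
      simp only [N.excess_source hg, N.excess_source hf.1, N.hst, if_true, if_false] at h
      omega
  · obtain ⟨g', hg', hexcess', hres⟩ := N.exists_push hg he
    refine ih (W.erase u') (Finset.erase_ssubset hu'W) g' u' (Finset.notMem_erase u' W) hg'
      (fun w hw => ?_) (Relation.ReflTransGen.mono ?_ _ _ hrest.avoid_start)
    · have h := hexcess w hw
      rw [hexcess']
      split_ifs at h ⊢ <;> linarith
    · rintro a b ⟨⟨hab, hbW⟩, hbu'⟩
      exact ⟨(hres a b (ne_of_mem_of_not_mem hbW huW) hbu').2 hab,
        Finset.mem_erase.2 ⟨hbu', hbW⟩⟩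

lemma source_notMem_Tset {f : V → V → ℕ} (hf : N.IsMaxFlow f) : N.s ∉ N.Tset f := by
  intro h
  obtain ⟨g, hg, hval⟩ := N.exists_flow_value_succ_of_reach hf.1 (Finset.univ.erase N.s) f N.s
    (Finset.notMem_erase _ _) hf.1.1 (fun _ _ => rfl)
    (Relation.ReflTransGen.mono (fun a b ⟨hab, hb⟩ =>
      ⟨hab, Finset.mem_erase.2 ⟨hb, Finset.mem_univ b⟩⟩) _ _ h.avoid_start)
  have := hf.2 g hg
  omega

lemma sum_excess (g : V → V → ℕ) (X : Finset V) :
    ∑ w ∈ X, excess g w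
      = ∑ w ∈ X, ∑ a ∈ Xᶜ, (g a w : ℤ) - ∑ w ∈ X, ∑ a ∈ Xᶜ, (g w a : ℤ) := by
  have hsplit : ∀ h : V → ℤ, ∑ a, h a = ∑ a ∈ X, h a + ∑ a ∈ Xᶜ, h a :=
    fun h => (Finset.sum_add_sum_compl X h).symm
  simp only [excess, hsplit fun a => (g a _ : ℤ), hsplit fun a => (g _ a : ℤ),
    Finset.sum_sub_distrib, Finset.sum_add_distrib]
  rw [Finset.sum_comm (s := X) (t := X) (f := fun w a => (g a w : ℤ))]
  ring

lemma value_eq_flow_across_cut {g : V → V → ℕ} (hg : N.IsFlow g) {X : Finset V}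
    (hs : N.s ∈ X) (ht : N.t ∉ X) :
    (N.value g : ℤ) = ∑ u ∈ X, ∑ w ∈ Xᶜ, (g u w : ℤ) - ∑ u ∈ X, ∑ w ∈ Xᶜ, (g w u : ℤ) := by
  have h : ∑ w ∈ X, excess g w = excess g N.s :=
    Finset.sum_eq_single_of_mem _ hs fun w hw hws =>
      N.excess_eq_zero hg hws (ne_of_mem_of_not_mem hw ht)
  rw [sum_excess, N.excess_source hg.1] at h
  linarith

lemma saturates_cut_of_saturates_cut {f g : V → V → ℕ} (hf : N.IsMaxFlow f)
    (hg : N.IsMaxFlow g) {X : Finset V} (hs : N.s ∈ X) (ht : N.t ∉ X)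
    (hsat : ∀ u ∈ X, ∀ w ∉ X, f u w = N.c u w) (hback : ∀ u ∈ X, ∀ w ∉ X, f w u = 0) :
    ∀ u ∈ X, ∀ w ∉ X, g u w = N.c u w := by
  have hval : N.value g = N.value f := le_antisymm (hf.2 g hg.1) (hg.2 f hf.1)
  have hcap : (N.value f : ℤ) = ∑ u ∈ X, ∑ w ∈ Xᶜ, (N.c u w : ℤ) := by
    have hout : ∑ u ∈ X, ∑ w ∈ Xᶜ, (f u w : ℤ) = ∑ u ∈ X, ∑ w ∈ Xᶜ, (N.c u w : ℤ) :=
      Finset.sum_congr rfl fun u hu => Finset.sum_congr rfl fun w hw => by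
        rw [hsat u hu w (Finset.mem_compl.1 hw)]
    have hin : ∑ u ∈ X, ∑ w ∈ Xᶜ, (f w u : ℤ) = 0 :=
      Finset.sum_eq_zero fun u hu => Finset.sum_eq_zero fun w hw => by
        rw [hback u hu w (Finset.mem_compl.1 hw), Nat.cast_zero]
    rw [N.value_eq_flow_across_cut hf.1 hs ht, hout, hin, sub_zero]
  have hle : ∀ u ∈ X, ∑ w ∈ Xᶜ, (g u w : ℤ) ≤ ∑ w ∈ Xᶜ, (N.c u w : ℤ) :=
    fun u _ => Finset.sum_le_sum fun w _ => by exact_mod_cast hg.1.1 u w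
  have hout : ∑ u ∈ X, ∑ w ∈ Xᶜ, (g u w : ℤ) = ∑ u ∈ X, ∑ w ∈ Xᶜ, (N.c u w : ℤ) := by
    have hin : 0 ≤ ∑ u ∈ X, ∑ w ∈ Xᶜ, (g w u : ℤ) := by positivity
    have := N.value_eq_flow_across_cut hg.1 hs ht
    exact le_antisymm (Finset.sum_le_sum hle) (by rw [hval] at this; linarith)
  intro u hu w hw
  have hrow := (Finset.sum_eq_sum_iff_of_le hle).1 hout u hu
  have := (Finset.sum_eq_sum_iff_of_le fun w _ => (by exact_mod_cast hg.1.1 u w :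
    (g u w : ℤ) ≤ N.c u w)).1 hrow w (Finset.mem_compl.2 hw)
  exact_mod_cast this

lemma flow_eq_cap_and_back_eq_zero_of_notMem_Tset {f : V → V → ℕ}
    (hf : ∀ a b, f a b ≤ N.c a b) {u w : V} (hu : u ∉ N.Tset f) (hw : w ∈ N.Tset f) :
    f u w = N.c u w ∧ f w u = 0 := by
  constructor
  · by_contra hne
    exact hu (.head (Or.inl (lt_of_le_of_ne (hf u w) hne)) hw)
  · by_contra hne
    exact hu (.head (Or.inr (Nat.pos_of_ne_zero hne)) hw)

lemma saturates_edge_into_Tset {f g : V → V → ℕ} (hf : N.IsMaxFlow f) (hg : N.IsMaxFlow g)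
    {u w : V} (hu : u ∉ N.Tset f) (hw : w ∈ N.Tset f) : g u w = N.c u w := by
  have hmem : ∀ x, x ∈ (N.Tset f).toFinsetᶜ ↔ x ∉ N.Tset f := by simp
  have hnotMem : ∀ x, x ∉ (N.Tset f).toFinsetᶜ ↔ x ∈ N.Tset f := by simp
  have hsat := fun a ha b hb =>
    N.flow_eq_cap_and_back_eq_zero_of_notMem_Tset hf.1.1 ((hmem a).1 ha) ((hnotMem b).1 hb)
  exact N.saturates_cut_of_saturates_cut hf hg ((hmem _).2 (N.source_notMem_Tset hf))
    ((hnotMem _).2 .refl) (fun a ha b hb => (hsat a ha b hb).1)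
    (fun a ha b hb => (hsat a ha b hb).2) u ((hmem u).2 hu) w ((hnotMem w).2 hw)

lemma sum_flow_in_eq_of_unique_out {f : V → V → ℕ} (hf : N.IsFlow f) {w p : V}
    (hs : w ≠ N.s) (ht : w ≠ N.t) (hout : ∀ u, u ≠ p → N.c w u = 0) :
    ∑ a, f a w = f w p := by
  rw [hf.2 w hs ht]
  exact Finset.sum_eq_single p (fun a _ hap => Nat.le_zero.1 ((hf.1 w a).trans_eq (hout a hap)))
    (absurd (Finset.mem_univ p))

lemma flow_pos_out_of_unique_out {f : V → V → ℕ} (hf : N.IsFlow f) {w p x : V}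
    (hs : w ≠ N.s) (ht : w ≠ N.t) (hout : ∀ u, u ≠ p → N.c w u = 0) (hx : 0 < f x w) :
    0 < f w p := by
  rw [← N.sum_flow_in_eq_of_unique_out hf hs ht hout]
  exact hx.trans_le (Finset.single_le_sum (fun a _ => Nat.zero_le (f a w)) (Finset.mem_univ x))

section InTree

variable {D : Set V} {v : V} {par : V → V}

lemma reach_of_flow_to_par {f : V → V → ℕ} (hf : N.IsFlow f) (hsD : N.s ∉ D) (htD : N.t ∉ D)
    (hpar_out : ∀ w ∈ D, ∀ u, u ≠ par w → N.c w u = 0) (hpar_mem : ∀ w ∈ D, w ≠ v → par w ∈ D)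
    {k : ℕ} {x : V} (hx : x ∈ D) (hk : par^[k] x = v) (hpos : 0 < f x (par x)) :
    Relation.ReflTransGen (N.ResEdge f) v x := by
  induction k generalizing x with
  | zero => exact hk ▸ .refl
  | succ k ih =>
    by_cases hxv : x = v
    · exact hxv ▸ .refl
    have hpx := hpar_mem x hx hxv
    have hpos' : 0 < f (par x) (par (par x)) :=
      N.flow_pos_out_of_unique_out hf (ne_of_mem_of_not_mem hpx hsD)
        (ne_of_mem_of_not_mem hpx htD) (hpar_out _ hpx) hpos
    exact (ih hpx hk hpos').tail (Or.inr hpos)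

lemma root_mem_Tset {f : V → V → ℕ} (hf : N.IsFlow f) (hsD : N.s ∉ D) (htD : N.t ∉ D)
    (hpar_out : ∀ w ∈ D, ∀ u, u ≠ par w → N.c w u = 0) (hpar_mem : ∀ w ∈ D, w ≠ v → par w ∈ D)
    (hpar_iter : ∀ w ∈ D, ∃ k : ℕ, par^[k] w = v) {w : V} (hw : w ∈ D)
    (hwT : w ∈ N.Tset f) : v ∈ N.Tset f := by
  induction hwT using Relation.ReflTransGen.head_induction_on with
  | refl => exact absurd hw htD
  | @head a b hab hbt ih =>
    by_cases hbD : b ∈ D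
    · exact ih hbD
    rcases hab with hlt | hpos
    · have hb : b = par a := by
        by_contra hne
        rw [hpar_out a hw b hne] at hlt
        omega
      have hav : a = v := by
        by_contra hne
        exact hbD (hb ▸ hpar_mem a hw hne)
      exact hav ▸ hbt.head (Or.inl hlt)
    · obtain ⟨k, hk⟩ := hpar_iter a hw
      have hpos' : 0 < f a (par a) :=
        N.flow_pos_out_of_unique_out hf (ne_of_mem_of_not_mem hw hsD)
          (ne_of_mem_of_not_mem hw htD) (hpar_out a hw) hpos
      exact (N.reach_of_flow_to_par hf hsD htD hpar_out hpar_mem hw hk hpos').trans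
        (hbt.head (Or.inr hpos))

end InTree

end FlowNet

theorem stmt7_general {V : Type} [Fintype V] (N : FlowNet V) (f : V → V → ℕ)
    (hf : N.IsMaxFlow f)
    (D : Set V) (hsD : N.s ∉ D) (htD : N.t ∉ D)
    (v : V) (par : V → V)
    (hpar1 : ∀ w ∈ D, 0 < N.c w (par w) ∧ ∀ u, u ≠ par w → N.c w u = 0)
    (hpar2 : ∀ w ∈ D, w ≠ v → par w ∈ D)
    (hpar4 : ∀ w ∈ D, ∃ k : ℕ, par^[k] w = v)
    (hvSU : v ∈ N.Sset f ∪ N.Uset f) :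
    D ⊆ N.Sset f ∪ N.Uset f ∧
      (par v ∈ N.Tset f →
        ∀ g, N.IsMaxFlow g → g v (par v) = N.c v (par v)) := by
  have hvT : v ∉ N.Tset f := by
    intro hvT
    rcases hvSU with hvS | hvU
    · exact N.source_notMem_Tset hf (Relation.ReflTransGen.trans hvS hvT)
    · exact hvU (Or.inr hvT)
  refine ⟨fun w hw => ?_, fun hpvT g hg => N.saturates_edge_into_Tset hf hg hvT hpvT⟩
  by_cases hwS : w ∈ N.Sset f
  · exact Or.inl hwS
  · refine Or.inr fun hwST => hwST.elim hwS fun hwT => hvT ?_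
    exact N.root_mem_Tset hf.1 hsD htD (fun w hw => (hpar1 w hw).2) hpar2 hpar4 hw hwT

/-- let `D` be an out-tree rooted at `v` (each `w ∈ D` has a unique outgoing
positive-capacity edge, to `par w`). If `v ∈ S_f ∪ U_f` then `D ⊆ S_f ∪ U_f`; moreover
if additionally `par v ∈ T_f` then every maximum flow saturates the edge from `v` to `par v`. -/
theorem stmt7 {V : Type} [Fintype V] (N : FlowNet V) (f : V → V → ℕ)
    (hf : N.IsMaxFlow f)
    (D : Set V) (hsD : N.s ∉ D) (htD : N.t ∉ D)
    (v : V) (hvD : v ∈ D) (par : V → V)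
    (hpar1 : ∀ w ∈ D, 0 < N.c w (par w) ∧ ∀ u, u ≠ par w → N.c w u = 0)
    (hpar2 : ∀ w ∈ D, w ≠ v → par w ∈ D)
    (hpar3 : par v ∉ D)
    (hpar4 : ∀ w ∈ D, ∃ k : ℕ, par^[k] w = v)
    (hvSU : v ∈ N.Sset f ∪ N.Uset f) :
    D ⊆ N.Sset f ∪ N.Uset f ∧
      (par v ∈ N.Tset f →
        ∀ g, N.IsMaxFlow g → g v (par v) = N.c v (par v)) :=
  stmt7_general N f hf D hsD htD v par hpar1 hpar2 hpar4 hvSU
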